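/- For every positive integer n, the polynomial identity [n+1]_q · Σ_{T ∈ SYT(2×n)} q^{maj(T)} = q^n · [2n choose n]_q holds in ℤ[q]. -/

import Mathlib

open Polynomial

/-- The q-integer `[n]_q = 1 + q + ⋯ + q^(n-1)` in `ℤ[q]`. -/
noncomputable def qInt (n : ℕ) : Polynomial ℤ := ∑ i ∈ Finset.range n, X ^ i

/-- The Gaussian binomial coefficient `[a choose b]_q` in `ℤ[q]`, defined by the
standard q-Pascal recurrence `[n+1 choose k+1] = [n choose k] + q^(k+1) [n choose k+1]`. -/
noncomputable def qBinom : ℕ → ℕ → Polynomial ℤ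
  | _, 0 => 1
  | 0, _ + 1 => 0
  | n + 1, k + 1 => qBinom n k + X ^ (k + 1) * qBinom n (k + 1)

/-- Major index: sum of all `i` such that `i` appears in row 1 and `i+1` appears in row 2. -/
def maj {n : ℕ} (T : (Fin n → ℕ) × (Fin n → ℕ)) : ℕ :=
  ∑ i ∈ (Finset.image T.1 Finset.univ).filter (fun i => ∃ j, T.2 j = i + 1), i

/-- Standard Young tableaux of shape 2×n: rows and columns strictly increasing,
entry set exactly `{1, …, 2n}` (each value appearing exactly once). -/
def SYT (n : ℕ) : Set ((Fin n → ℕ) × (Fin n → ℕ)) :=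
  {T | StrictMono T.1 ∧ StrictMono T.2 ∧ (∀ i, T.1 i < T.2 i) ∧
    Set.range T.1 ∪ Set.range T.2 = Set.Icc 1 (2 * n)}

/-!
A tableau is determined by its first row `A ⊆ {1, …, 2n}`, and column strictness says exactly
that `A` is a ballot set: each initial segment `{1, …, v}` meets `A` in at least `v / 2`
elements. Then `maj` is the sum of the `i ∈ A` with `i + 1 ∉ A`, `i < 2n`. Sorting the ballot
sets of shape `(a + 1, b + 1)` by the row of the largest entry gives a recursion: in the first
row that entry does not change `maj`, in the second row it adds the previous largest entry
`a + b + 1` iff the latter lies in the first row. The q-ballot numbers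
`[a+b choose a] - [a+b choose a+1]` satisfy the same recursion, thanks to the absorption identity
`[k+1] [n+1 choose k+1] = [n+1] [n choose k]`. Finally
`[n+1] ([2n choose n] - [2n choose n+1]) = q^n [2n choose n]` because
`[n+1] [2n choose n+1] = [n] [2n choose n]`.
-/

open Finset

noncomputable def qFact : ℕ → Polynomial ℤ
  | 0 => 1
  | n + 1 => qFact n * qInt (n + 1)

lemma qFact_succ (n : ℕ) : qFact (n + 1) = qFact n * qInt (n + 1) := rfl

lemma qInt_succ (n : ℕ) : qInt (n + 1) = qInt n + X ^ n := sum_range_succ _ _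

lemma qInt_add (a b : ℕ) : qInt (a + b) = qInt a + X ^ a * qInt b := by
  simp [qInt, sum_range_add, mul_sum, pow_add]

lemma qInt_mul_X_sub_one (n : ℕ) : qInt n * (X - 1) = X ^ n - 1 := geom_sum_mul X n

lemma qFact_monic : ∀ n, (qFact n).Monic
  | 0 => monic_one
  | n + 1 => (qFact_monic n).mul (monic_geom_sum_X n.succ_ne_zero)

lemma qFact_mul_qFact_ne_zero (a b : ℕ) : qFact a * qFact b ≠ 0 :=
  ((qFact_monic a).mul (qFact_monic b)).ne_zero

lemma qBinom_zero_right (n : ℕ) : qBinom n 0 = 1 := by cases n <;> rfl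

lemma qBinom_succ_succ (n k : ℕ) :
    qBinom (n + 1) (k + 1) = qBinom n k + X ^ (k + 1) * qBinom n (k + 1) := rfl

lemma qBinom_eq_zero_of_lt : ∀ {n k : ℕ}, n < k → qBinom n k = 0
  | 0, _ + 1, _ => rfl
  | n + 1, k + 1, h => by
    rw [qBinom_succ_succ, qBinom_eq_zero_of_lt (by omega), qBinom_eq_zero_of_lt (by omega)]
    ring

lemma qBinom_self : ∀ n, qBinom n n = 1
  | 0 => rfl
  | n + 1 => by rw [qBinom_succ_succ, qBinom_self n, qBinom_eq_zero_of_lt n.lt_succ_self]; ring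

lemma qBinom_add_mul_qFact (a b : ℕ) :
    qBinom (a + b) a * (qFact a * qFact b) = qFact (a + b) := by
  induction b generalizing a with
  | zero => simp [qBinom_self, qFact]
  | succ b ihb =>
    induction a with
    | zero => simp [qBinom_zero_right, qFact]
    | succ a iha =>
      have h₁ := ihb (a + 1)
      rw [show a + 1 + b = a + b + 1 by omega, qFact_succ a] at h₁
      rw [show a + (b + 1) = a + b + 1 by omega, qFact_succ b] at iha
      rw [show a + 1 + (b + 1) = a + b + 1 + 1 by omega, qBinom_succ_succ, qFact_succ (a + b + 1),
        show a + b + 1 + 1 = a + 1 + (b + 1) by omega, qInt_add, qFact_succ a, qFact_succ b]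
      linear_combination qInt (a + 1) * iha + X ^ (a + 1) * qInt (b + 1) * h₁

lemma qBinom_add_symm (a b : ℕ) : qBinom (a + b) a = qBinom (a + b) b := by
  refine mul_right_cancel₀ (qFact_mul_qFact_ne_zero a b) ?_
  rw [qBinom_add_mul_qFact, mul_comm (qFact a), add_comm a b, qBinom_add_mul_qFact]

lemma qInt_mul_qBinom_succ_succ (n k : ℕ) :
    qInt (k + 1) * qBinom (n + 1) (k + 1) = qInt (n + 1) * qBinom n k := by
  obtain hnk | hkn := lt_or_ge n k
  · rw [qBinom_eq_zero_of_lt hnk, qBinom_eq_zero_of_lt (by omega), mul_zero, mul_zero]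
  obtain ⟨j, rfl⟩ := Nat.exists_eq_add_of_le hkn
  refine mul_right_cancel₀ (qFact_mul_qFact_ne_zero k j) ?_
  have h₁ := qBinom_add_mul_qFact (k + 1) j
  rw [show k + 1 + j = k + j + 1 by omega, qFact_succ] at h₁
  linear_combination h₁ - qInt (k + j + 1) * qBinom_add_mul_qFact k j + qFact_succ (k + j)

lemma qInt_succ_mul_qBinom_add (a b : ℕ) :
    qInt (a + 1) * qBinom (a + b) (a + 1) = qInt b * qBinom (a + b) a := by
  cases b with
  | zero => rw [add_zero, qBinom_eq_zero_of_lt a.lt_succ_self]; simp [qInt]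
  | succ b =>
    refine mul_right_cancel₀ (qFact_mul_qFact_ne_zero a b) ?_
    have h₁ := qBinom_add_mul_qFact (a + 1) b
    have h₂ := qBinom_add_mul_qFact a (b + 1)
    rw [show a + 1 + b = a + (b + 1) by omega, qFact_succ] at h₁
    rw [qFact_succ] at h₂
    linear_combination h₁ - h₂

noncomputable def qBallot (a b : ℕ) : Polynomial ℤ := qBinom (a + b) a - qBinom (a + b) (a + 1)

lemma qBallot_zero_right (a : ℕ) : qBallot a 0 = 1 := by
  rw [qBallot, add_zero, qBinom_self, qBinom_eq_zero_of_lt a.lt_succ_self, sub_zero]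

lemma qBallot_self_succ (a : ℕ) : qBallot a (a + 1) = 0 := by
  rw [qBallot, qBinom_add_symm, sub_self]

lemma qBallot_succ_succ (a b : ℕ) :
    qBallot (a + 1) (b + 1) =
      qBallot a (b + 1) + qBallot (a + 1) b + (X ^ (a + b + 1) - 1) * qBallot a b := by
  simp only [qBallot, show a + 1 + (b + 1) = a + b + 1 + 1 by omega,
    show a + (b + 1) = a + b + 1 by omega, show a + 1 + b = a + b + 1 by omega]
  -- q-Pascal on the left; the rest is absorption, after writing `q ^ k - 1 = [k] (q - 1)`.
  linear_combination qBinom_succ_succ (a + b + 1) a - qBinom_succ_succ (a + b + 1) (a + 1)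
    - qBinom (a + b + 1) (a + 1) * qInt_mul_X_sub_one (a + 1)
    + qBinom (a + b + 1) (a + 2) * qInt_mul_X_sub_one (a + 2)
    + (qBinom (a + b) a - qBinom (a + b) (a + 1)) * qInt_mul_X_sub_one (a + b + 1)
    + (X - 1) * qInt_mul_qBinom_succ_succ (a + b) a
    - (X - 1) * qInt_mul_qBinom_succ_succ (a + b) (a + 1)

lemma qInt_succ_mul_qBallot_self (n : ℕ) :
    qInt (n + 1) * qBallot n n = X ^ n * qBinom (n + n) n := by
  rw [qBallot]
  linear_combination qBinom (n + n) n * qInt_succ n - qInt_succ_mul_qBinom_add n n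

/- `ballotSets m k` consists of the first rows of the standard tableaux of shape `(k, m - k)`
filled with `1, …, m` (the second row being the complement in `Icc 1 m`), and `ballotMaj m A`
is the major index of that tableau. -/
def IsBallot (m : ℕ) (A : Finset ℕ) : Prop := ∀ v ≤ m, v ≤ 2 * #{x ∈ A | x ≤ v}

instance (m : ℕ) : DecidablePred (IsBallot m) :=
  fun _ => inferInstanceAs (Decidable (∀ v ≤ m, _))

def ballotSets (m k : ℕ) : Finset (Finset ℕ) := {A ∈ (Icc 1 m).powersetCard k | IsBallot m A}

def ballotMaj (m : ℕ) (A : Finset ℕ) : ℕ := ∑ i ∈ A with i + 1 ≤ m ∧ i + 1 ∉ A, i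

noncomputable def ballotMajPoly (a b : ℕ) : Polynomial ℤ :=
  ∑ A ∈ ballotSets (a + b) a, X ^ ballotMaj (a + b) A

lemma mem_ballotSets {m k : ℕ} {A : Finset ℕ} :
    A ∈ ballotSets m k ↔ A ⊆ Icc 1 m ∧ #A = k ∧ IsBallot m A := by
  simp [ballotSets, mem_powersetCard, and_assoc]

lemma isBallot_succ_iff {m : ℕ} {A : Finset ℕ} :
    IsBallot (m + 1) A ↔ IsBallot m A ∧ m + 1 ≤ 2 * #{x ∈ A | x ≤ m + 1} := by
  refine ⟨fun h => ⟨fun v hv => h v (by omega), h _ le_rfl⟩, fun ⟨h, hm⟩ v hv => ?_⟩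
  obtain hv | rfl := Nat.le_succ_iff.mp hv
  exacts [h v hv, hm]

lemma isBallot_insert_iff {m : ℕ} {A : Finset ℕ} :
    IsBallot m (insert (m + 1) A) ↔ IsBallot m A := by
  refine forall₂_congr fun v hv => ?_
  rw [filter_insert, if_neg (by omega)]

lemma filter_le_eq_self {m v : ℕ} {A : Finset ℕ} (hA : A ⊆ Icc 1 m) (hv : m ≤ v) :
    {x ∈ A | x ≤ v} = A :=
  filter_true_of_mem fun _ hx => (mem_Icc.mp (hA hx)).2.trans hv

lemma succ_notMem_of_subset_Icc {m : ℕ} {A : Finset ℕ} (hA : A ⊆ Icc 1 m) : m + 1 ∉ A :=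
  fun h => by simpa using hA h

lemma subset_Icc_of_succ_notMem {m : ℕ} {A : Finset ℕ} (hA : A ⊆ Icc 1 (m + 1))
    (hm : m + 1 ∉ A) : A ⊆ Icc 1 m := fun x hx => by
  have := mem_Icc.mp (hA hx)
  have : x ≠ m + 1 := ne_of_mem_of_not_mem hx hm
  simp only [mem_Icc]
  omega

lemma ballotSets_eq_empty {m k : ℕ} (h : 2 * k < m) : ballotSets m k = ∅ := by
  refine eq_empty_of_forall_notMem fun A hA => ?_
  obtain ⟨hsub, hcard, hbal⟩ := mem_ballotSets.mp hA
  have := hbal m le_rfl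
  rw [filter_le_eq_self hsub le_rfl, hcard] at this
  omega

lemma ballotSets_self (m : ℕ) : ballotSets m m = {Icc 1 m} := by
  ext A
  rw [mem_ballotSets, mem_singleton]
  constructor
  · rintro ⟨hsub, hcard, -⟩
    exact eq_of_subset_of_card_le hsub (by simp [hcard])
  · rintro rfl
    refine ⟨subset_rfl, by simp, fun v hv => ?_⟩
    rw [show {x ∈ Icc 1 m | x ≤ v} = Icc 1 v by ext; simp; omega, Nat.card_Icc]
    omega

lemma ballotMaj_Icc (m : ℕ) : ballotMaj m (Icc 1 m) = 0 :=
  sum_eq_zero fun i hi => by simp at hi; omega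

lemma ballotMaj_insert {m : ℕ} {A : Finset ℕ} (hA : A ⊆ Icc 1 m) :
    ballotMaj (m + 1) (insert (m + 1) A) = ballotMaj m A := by
  rw [ballotMaj, filter_insert, if_neg (by omega)]
  refine sum_congr (filter_congr fun i hi => ?_) fun _ _ => rfl
  have := (mem_Icc.mp (hA hi)).2
  by_cases h : i + 1 ∈ A
  · simp [h]
  · simp [h]
    omega

lemma ballotMaj_succ {m : ℕ} {A : Finset ℕ} (hA : A ⊆ Icc 1 m) :
    ballotMaj (m + 1) A = ballotMaj m A + if m ∈ A then m else 0 := by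
  rw [ballotMaj, ballotMaj, sum_filter, sum_filter, ← sum_ite_eq' A m (fun i => i),
    ← sum_add_distrib]
  refine sum_congr rfl fun i hi => ?_
  have := (mem_Icc.mp (hA hi)).2
  by_cases h : i + 1 ∈ A
  · have := (mem_Icc.mp (hA h)).2
    simp [h]
    omega
  · simp [h]
    split_ifs <;> omega

lemma sum_ballotSets_filter_mem (m k : ℕ) :
    ∑ A ∈ ballotSets (m + 1) (k + 1) with m + 1 ∈ A,
        (X : Polynomial ℤ) ^ ballotMaj (m + 1) A =
      ∑ A ∈ ballotSets m k, X ^ ballotMaj m A := by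
  symm
  refine sum_nbij' (insert (m + 1)) (fun A => A.erase (m + 1)) (fun A hA => ?_) (fun A hA => ?_)
    (fun A hA => erase_insert (succ_notMem_of_subset_Icc (mem_ballotSets.mp hA).1))
    (fun A hA => insert_erase (mem_filter.mp hA).2)
    (fun A hA => by rw [ballotMaj_insert (mem_ballotSets.mp hA).1])
  · obtain ⟨hsub, hcard, hbal⟩ := mem_ballotSets.mp hA
    have hsub' : insert (m + 1) A ⊆ Icc 1 (m + 1) :=
      insert_subset (by simp) (hsub.trans (Icc_subset_Icc_right m.le_succ))
    have hm := hbal m le_rfl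
    rw [filter_le_eq_self hsub le_rfl, hcard] at hm
    rw [mem_filter, mem_ballotSets, isBallot_succ_iff, isBallot_insert_iff,
      filter_le_eq_self hsub' le_rfl, card_insert_of_notMem (succ_notMem_of_subset_Icc hsub), hcard]
    exact ⟨⟨hsub', rfl, hbal, by omega⟩, mem_insert_self _ _⟩
  · obtain ⟨hA, hm⟩ := mem_filter.mp hA
    obtain ⟨hsub, hcard, hbal⟩ := mem_ballotSets.mp hA
    refine mem_ballotSets.mpr ⟨subset_Icc_of_succ_notMem ((erase_subset _ _).trans hsub)
      (notMem_erase _ _), by rw [card_erase_of_mem hm, hcard]; rfl, ?_⟩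
    rw [← isBallot_insert_iff, insert_erase hm]
    exact (isBallot_succ_iff.mp hbal).1

lemma filter_notMem_ballotSets_succ (m k : ℕ) :
    {A ∈ ballotSets (m + 1) k | m + 1 ∉ A} =
      if m + 1 ≤ 2 * k then ballotSets m k else ∅ := by
  rw [← filter_const]
  ext A
  simp only [mem_filter, mem_ballotSets]
  constructor
  · rintro ⟨⟨hsub, hcard, hbal⟩, hm⟩
    have hsub' := subset_Icc_of_succ_notMem hsub hm
    rw [isBallot_succ_iff, filter_le_eq_self hsub' (by omega), hcard] at hbal
    exact ⟨⟨hsub', hcard, hbal.1⟩, hbal.2⟩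
  · rintro ⟨⟨hsub, hcard, hbal⟩, hk⟩
    refine ⟨⟨hsub.trans (Icc_subset_Icc_right m.le_succ), hcard,
      isBallot_succ_iff.mpr ⟨hbal, ?_⟩⟩, succ_notMem_of_subset_Icc hsub⟩
    rwa [filter_le_eq_self hsub (by omega), hcard]

lemma sum_ballotSets_ballotMaj_succ (m k : ℕ) :
    ∑ A ∈ ballotSets m k, (X : Polynomial ℤ) ^ ballotMaj (m + 1) A =
      ∑ A ∈ ballotSets m k, X ^ ballotMaj m A +
        (X ^ m - 1) * ∑ A ∈ ballotSets m k with m ∈ A, X ^ ballotMaj m A := by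
  rw [mul_sum, sum_filter, ← sum_add_distrib]
  refine sum_congr rfl fun A hA => ?_
  rw [ballotMaj_succ (mem_ballotSets.mp hA).1, pow_add]
  split_ifs <;> ring

lemma ballotMajPoly_succ_succ (a b : ℕ) :
    ballotMajPoly (a + 1) (b + 1) = ballotMajPoly a (b + 1) +
      if b ≤ a then ballotMajPoly (a + 1) b + (X ^ (a + b + 1) - 1) * ballotMajPoly a b
      else 0 := by
  rw [ballotMajPoly, show a + 1 + (b + 1) = a + b + 1 + 1 by omega,
    ← sum_filter_add_sum_filter_not _ (fun A => a + b + 1 + 1 ∈ A), sum_ballotSets_filter_mem,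
    filter_notMem_ballotSets_succ]
  congr 1
  by_cases hb : b ≤ a
  · rw [if_pos (show a + b + 1 + 1 ≤ 2 * (a + 1) by omega), if_pos hb,
      sum_ballotSets_ballotMaj_succ, sum_ballotSets_filter_mem, ballotMajPoly, ballotMajPoly,
      show a + 1 + b = a + b + 1 by omega]
  · rw [if_neg (show ¬a + b + 1 + 1 ≤ 2 * (a + 1) by omega), if_neg hb, sum_empty]

lemma ballotMajPoly_zero_right (a : ℕ) : ballotMajPoly a 0 = 1 := by
  rw [ballotMajPoly, add_zero, ballotSets_self, sum_singleton, ballotMaj_Icc, pow_zero]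

lemma ballotMajPoly_eq_zero {a b : ℕ} (h : a < b) : ballotMajPoly a b = 0 := by
  rw [ballotMajPoly, ballotSets_eq_empty (by omega), sum_empty]

theorem ballotMajPoly_eq_qBallot (a b : ℕ) (h : b ≤ a + 1) :
    ballotMajPoly a b = qBallot a b := by
  induction b generalizing a with
  | zero => rw [ballotMajPoly_zero_right, qBallot_zero_right]
  | succ b ihb =>
    induction a with
    | zero =>
      rw [show b = 0 by omega, ballotMajPoly_eq_zero (Nat.lt_succ_self _), qBallot_self_succ]
    | succ a iha =>
      obtain hb | rfl := (show b ≤ a ∨ b = a + 1 by omega)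
      · rw [ballotMajPoly_succ_succ, if_pos hb, iha (by omega), ihb _ (by omega),
          ihb _ (by omega), qBallot_succ_succ]
        ring
      · rw [ballotMajPoly_eq_zero (Nat.lt_succ_self _), qBallot_self_succ]

lemma card_filter_image_le {n : ℕ} {a : Fin n → ℕ} (ha : Function.Injective a) (v : ℕ) :
    #{x ∈ univ.image a | x ≤ v} = #{j | a j ≤ v} := by
  rw [filter_image, card_image_of_injective _ ha]

lemma forall_lt_iff_card_le {n : ℕ} {a b : Fin n → ℕ} (ha : StrictMono a) (hb : StrictMono b)
    (hab : ∀ i, a i ≠ b i) :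
    (∀ i, a i < b i) ↔ ∀ v, #{j | b j ≤ v} ≤ #{j | a j ≤ v} := by
  refine ⟨fun h v => card_le_card fun j hj => ?_, fun h i => ?_⟩
  · simp only [mem_filter, mem_univ, true_and] at hj ⊢
    exact (h j).le.trans hj
  · by_contra hi
    have hlt : b i < a i := lt_of_le_of_ne (not_lt.mp hi) (hab i).symm
    have hb' : ({j | b j ≤ b i} : Finset (Fin n)) = Iic i := by ext j; simp [hb.le_iff_le]
    have ha' : ({j | a j ≤ b i} : Finset (Fin n)) ⊆ Iio i := fun j hj => by
      simp only [mem_filter, mem_univ, true_and, mem_Iio] at hj ⊢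
      exact ha.lt_iff_lt.mp (hj.trans_lt hlt)
    have := (h (b i)).trans (card_le_card ha')
    rw [hb', Fin.card_Iic, Fin.card_Iio] at this
    omega

lemma card_filter_add_card_filter_sdiff {m : ℕ} {A : Finset ℕ} (hA : A ⊆ Icc 1 m) (v : ℕ) :
    #{x ∈ A | x ≤ v} + #{x ∈ Icc 1 m \ A | x ≤ v} = min v m := by
  rw [← card_union_of_disjoint (disjoint_filter_filter disjoint_sdiff), ← filter_union,
    union_sdiff_of_subset hA, show {x ∈ Icc 1 m | x ≤ v} = Icc 1 (min v m) by ext; simp; omega]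
  simp

lemma isBallot_iff_card_le {m : ℕ} {A : Finset ℕ} (hA : A ⊆ Icc 1 m) :
    IsBallot m A ↔ ∀ v, #{x ∈ Icc 1 m \ A | x ≤ v} ≤ #{x ∈ A | x ≤ v} := by
  refine ⟨fun h v => ?_, fun h v hv => ?_⟩
  · have hsum := card_filter_add_card_filter_sdiff hA v
    obtain hv | hv := le_total v m
    · have := h v hv
      omega
    · have hm := h m le_rfl
      rw [filter_le_eq_self hA le_rfl] at hm
      rw [filter_le_eq_self hA hv, min_eq_right hv] at hsum
      rw [filter_le_eq_self hA hv]
      omega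
  · have := card_filter_add_card_filter_sdiff hA v
    have := h v
    omega

lemma mem_SYT_iff {n : ℕ} {T : (Fin n → ℕ) × (Fin n → ℕ)} :
    T ∈ SYT n ↔
      StrictMono T.1 ∧ StrictMono T.2 ∧ univ.image T.1 ∈ ballotSets (2 * n) n ∧
        univ.image T.2 = Icc 1 (2 * n) \ univ.image T.1 := by
  constructor
  · rintro ⟨h₁, h₂, hcol, hrange⟩
    have hcard₁ : #(univ.image T.1) = n := by
      rw [card_image_of_injective _ h₁.injective, card_fin]
    have hcard₂ : #(univ.image T.2) = n := by
      rw [card_image_of_injective _ h₂.injective, card_fin]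
    have hunion : univ.image T.1 ∪ univ.image T.2 = Icc 1 (2 * n) := by
      apply Finset.coe_injective
      simpa using hrange
    have hdisj : Disjoint (univ.image T.1) (univ.image T.2) := by
      rw [← card_union_eq_card_add_card, hunion, Nat.card_Icc, hcard₁, hcard₂]
      omega
    have hsub : univ.image T.1 ⊆ Icc 1 (2 * n) := hunion ▸ subset_union_left
    have hC : univ.image T.2 = Icc 1 (2 * n) \ univ.image T.1 := by
      rw [← hunion, union_sdiff_cancel_left hdisj]
    refine ⟨h₁, h₂, mem_ballotSets.mpr
      ⟨hsub, hcard₁, (isBallot_iff_card_le hsub).mpr fun v => ?_⟩, hC⟩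
    rw [← hC, card_filter_image_le h₁.injective, card_filter_image_le h₂.injective]
    exact (forall_lt_iff_card_le h₁ h₂ fun i => (hcol i).ne).mp hcol v
  · rintro ⟨h₁, h₂, hA, hC⟩
    obtain ⟨hsub, -, hbal⟩ := mem_ballotSets.mp hA
    have hab : ∀ i, T.1 i ≠ T.2 i := fun i h => by
      have : T.2 i ∈ univ.image T.2 := mem_image_of_mem _ (mem_univ i)
      rw [hC, ← h] at this
      exact (mem_sdiff.mp this).2 (mem_image_of_mem _ (mem_univ i))
    refine ⟨h₁, h₂, (forall_lt_iff_card_le h₁ h₂ hab).mpr fun v => ?_, ?_⟩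
    · rw [← card_filter_image_le h₁.injective, ← card_filter_image_le h₂.injective, hC]
      exact (isBallot_iff_card_le hsub).mp hbal v
    · have := congrArg ((↑) : Finset ℕ → Set ℕ) (union_sdiff_of_subset hsub)
      rw [← hC] at this
      simpa using this

lemma maj_eq_ballotMaj {n : ℕ} {T : (Fin n → ℕ) × (Fin n → ℕ)} (hT : T ∈ SYT n) :
    maj T = ballotMaj (2 * n) (univ.image T.1) := by
  obtain ⟨-, -, -, hC⟩ := mem_SYT_iff.mp hT
  refine sum_congr (filter_congr fun i _ => ?_) fun _ _ => rfl
  have : (∃ j, T.2 j = i + 1) ↔ i + 1 ∈ univ.image T.2 := by simp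
  rw [this, hC, mem_sdiff, mem_Icc]
  exact and_congr_left' (and_iff_right (Nat.le_add_left 1 i))

theorem finsum_SYT_eq_ballotMajPoly (n : ℕ) :
    ∑ᶠ T ∈ SYT n, (X : Polynomial ℤ) ^ maj T = ballotMajPoly n n := by
  rw [ballotMajPoly, ← two_mul, ← finsum_mem_coe_finset]
  refine finsum_mem_eq_of_bijOn (fun T => univ.image T.1)
    ⟨fun T hT => (mem_SYT_iff.mp hT).2.2.1, ?_, ?_⟩ fun T hT => by rw [maj_eq_ballotMaj hT]
  · rintro T hT T' hT' (h : univ.image T.1 = univ.image T'.1)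
    obtain ⟨h₁, h₂, -, hC⟩ := mem_SYT_iff.mp hT
    obtain ⟨h₁', h₂', -, hC'⟩ := mem_SYT_iff.mp hT'
    have h' : univ.image T.2 = univ.image T'.2 := by rw [hC, hC', h]
    refine Prod.ext ((h₁.range_inj h₁').mp ?_) ((h₂.range_inj h₂').mp ?_)
    · simpa using congrArg ((↑) : Finset ℕ → Set ℕ) h
    · simpa using congrArg ((↑) : Finset ℕ → Set ℕ) h'
  · intro A hA
    obtain ⟨hsub, hcard, -⟩ := mem_ballotSets.mp hA
    have hC : #(Icc 1 (2 * n) \ A) = n := by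
      rw [card_sdiff_of_subset hsub, Nat.card_Icc, hcard]
      omega
    refine ⟨(A.orderEmbOfFin hcard, (Icc 1 (2 * n) \ A).orderEmbOfFin hC), mem_SYT_iff.mpr
      ⟨(A.orderEmbOfFin hcard).strictMono, ((Icc 1 (2 * n) \ A).orderEmbOfFin hC).strictMono,
        ?_, ?_⟩, image_orderEmbOfFin_univ _ _⟩
    · rwa [image_orderEmbOfFin_univ]
    · rw [image_orderEmbOfFin_univ, image_orderEmbOfFin_univ]

theorem cqn_general (n : ℕ) :
    qInt (n + 1) * ∑ᶠ T ∈ SYT n, (X : Polynomial ℤ) ^ maj T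
      = X ^ n * qBinom (2 * n) n := by
  rw [finsum_SYT_eq_ballotMajPoly, ballotMajPoly_eq_qBallot n n n.le_succ, two_mul,
    qInt_succ_mul_qBallot_self]

/-- [n+1]_q · Σ_{T ∈ SYT(2×n)} q^maj(T) = q^n · [2n choose n]_q. -/
theorem cqn (n : ℕ) (hn : 1 ≤ n) :
    qInt (n + 1) * ∑ᶠ T ∈ SYT n, (X : Polynomial ℤ) ^ maj T
      = X ^ n * qBinom (2 * n) n :=
  cqn_general n
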